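/- Let μ, ν be positive measures on ℝ, I an interval, and suppose the maximal operator bound ∫_I (M_μ χ_I)² dν ≤ C_M·μ(I) holds, where M_μ φ(x) := sup_{intervals ℓ ∋ x} (1/|ℓ|)∫_ℓ |φ| dμ. Then for any finite family of pairwise disjoint subintervals {I_α} of I, Σ_α [P_{I_α}(χ_I dμ)]²·ν(I_α) ≤ A·C_M·μ(I), where P_{[a,b]}(dσ) := (1/π)∫_ℝ (b-a)/((b-a)² + ((a+b)/2 - t)²) dσ(t) and A is an absolute constant. -/

import Mathlib

open MeasureTheory Set ENNReal

/-- Poisson average of the measure μ restricted to E, adapted to the interval [a,b]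
(evaluated at the center of [a,b] at height b-a). -/
noncomputable def poissonAvg (μ : Measure ℝ) (a b : ℝ) (E : Set ℝ) : ℝ≥0∞ :=
  ENNReal.ofReal (1 / Real.pi) *
    ∫⁻ t in E, ENNReal.ofReal ((b - a) / ((b - a) ^ 2 + ((a + b) / 2 - t) ^ 2)) ∂μ

/-- Two-weight maximal function of χ_E with respect to μ:
M_μ(χ_E)(x) = sup over intervals ℓ ∋ x of μ(ℓ ∩ E)/|ℓ|. -/
noncomputable def maxOp (μ : Measure ℝ) (E : Set ℝ) (x : ℝ) : ℝ≥0∞ :=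
  ⨆ (a : ℝ) (b : ℝ) (_ : a ≤ x ∧ x ≤ b ∧ a < b),
    μ (Set.Icc a b ∩ E) / ENNReal.ofReal (b - a)

/-
For x ∈ J = [c, d], let J_k be the interval with the centre of J and radius 2ᵏ|J|.
On J_k \ J_{k-1} the Poisson kernel of J is at most 4/(4ᵏ|J|), while
μ(J_k ∩ I) ≤ 2ᵏ⁺¹|J|·M_μ(χ_I)(x) because x ∈ J_k. Summing the geometric
series gives P_J(χ_I dμ) ≤ 16·M_μ(χ_I)(x) on all of J. Squaring, integrating over each I_α
against ν and summing over the disjoint I_α ⊆ I then bounds the left-hand side by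
256·∫_I (M_μ χ_I)² dν ≤ 256·C_M·μ(I).
-/

lemma exists_dyadic_radius {L : ℝ} (hL : 0 < L) (s : ℝ) :
    ∃ k : ℕ, |s| ≤ 2 ^ k * L ∧ (2 ^ k * L) ^ 2 ≤ 4 * (L ^ 2 + s ^ 2) := by
  have hex : ∃ k : ℕ, |s| ≤ 2 ^ k * L := by
    obtain ⟨n, hn⟩ := pow_unbounded_of_one_lt (|s| / L) one_lt_two
    exact ⟨n, ((div_lt_iff₀ hL).mp hn).le⟩
  refine ⟨Nat.find hex, Nat.find_spec hex, ?_⟩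
  rcases hk : Nat.find hex with _ | j
  · nlinarith [sq_nonneg s]
  · have hlt : 2 ^ j * L < |s| := not_le.mp (Nat.find_min hex (by omega))
    have hsq : (2 ^ j * L) ^ 2 ≤ s ^ 2 := by
      simpa only [sq_abs] using pow_le_pow_left₀ (by positivity) hlt.le 2
    calc (2 ^ (j + 1) * L) ^ 2 = 4 * (2 ^ j * L) ^ 2 := by ring
      _ ≤ 4 * (L ^ 2 + s ^ 2) := by nlinarith

lemma ofReal_poissonKernel_le_tsum {L : ℝ} (hL : 0 < L) (m t : ℝ) :
    ENNReal.ofReal (L / (L ^ 2 + (m - t) ^ 2)) ≤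
      ∑' k : ℕ, (Icc (m - 2 ^ k * L) (m + 2 ^ k * L)).indicator
        (fun _ => ENNReal.ofReal (4 * L / (2 ^ k * L) ^ 2)) t := by
  obtain ⟨k, hmem, hrad⟩ := exists_dyadic_radius hL (m - t)
  have hkernel : L / (L ^ 2 + (m - t) ^ 2) ≤ 4 * L / (2 ^ k * L) ^ 2 := by
    rw [div_le_div_iff₀ (by positivity) (by positivity)]
    nlinarith
  have ht : t ∈ Icc (m - 2 ^ k * L) (m + 2 ^ k * L) := by
    constructor <;> linarith [(abs_le.mp hmem).1, (abs_le.mp hmem).2]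
  calc ENNReal.ofReal (L / (L ^ 2 + (m - t) ^ 2))
      ≤ ENNReal.ofReal (4 * L / (2 ^ k * L) ^ 2) := ENNReal.ofReal_le_ofReal hkernel
    _ = (Icc (m - 2 ^ k * L) (m + 2 ^ k * L)).indicator
          (fun _ => ENNReal.ofReal (4 * L / (2 ^ k * L) ^ 2)) t :=
        (indicator_of_mem ht (fun _ => _)).symm
    _ ≤ _ := ENNReal.le_tsum k

lemma measure_Icc_inter_le_maxOp_mul (μ : Measure ℝ) (E : Set ℝ) {c d x : ℝ}
    (hcx : c ≤ x) (hxd : x ≤ d) (hcd : c < d) :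
    μ (Icc c d ∩ E) ≤ maxOp μ E x * ENNReal.ofReal (d - c) := by
  have hlen : ENNReal.ofReal (d - c) ≠ 0 := by simpa using hcd
  rw [← ENNReal.div_le_iff hlen ENNReal.ofReal_ne_top]
  exact le_iSup_of_le c (le_iSup_of_le d (le_iSup_of_le ⟨hcx, hxd, hcd⟩ le_rfl))

lemma dyadic_weight_mul_length {L : ℝ} (hL : 0 < L) (k : ℕ) :
    ENNReal.ofReal (4 * L / (2 ^ k * L) ^ 2) * ENNReal.ofReal (2 * (2 ^ k * L)) =
      8 * 2⁻¹ ^ k := by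
  rw [← ENNReal.ofReal_mul (by positivity)]
  have h : 4 * L / (2 ^ k * L) ^ 2 * (2 * (2 ^ k * L)) = 8 * (2⁻¹ : ℝ) ^ k := by
    rw [inv_pow]
    field_simp
    ring
  rw [h, ENNReal.ofReal_mul (by norm_num), ENNReal.ofReal_pow (by norm_num),
    ENNReal.ofReal_inv_of_pos two_pos]
  norm_num

lemma measure_dyadic_inter_le_maxOp_mul (μ : Measure ℝ) (E : Set ℝ) {L m x : ℝ} (hL : 0 < L)
    (hx : |x - m| ≤ L) (k : ℕ) :
    μ (Icc (m - 2 ^ k * L) (m + 2 ^ k * L) ∩ E) ≤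
      maxOp μ E x * ENNReal.ofReal (2 * (2 ^ k * L)) := by
  have h2k : (1 : ℝ) ≤ 2 ^ k := one_le_pow₀ one_le_two
  obtain ⟨hxl, hxr⟩ := abs_le.mp hx
  have := measure_Icc_inter_le_maxOp_mul μ E (x := x) (c := m - 2 ^ k * L)
    (d := m + 2 ^ k * L) (by nlinarith) (by nlinarith) (by nlinarith)
  rwa [show m + 2 ^ k * L - (m - 2 ^ k * L) = 2 * (2 ^ k * L) by ring] at this

lemma lintegral_poissonKernel_le_maxOp (μ : Measure ℝ) (E : Set ℝ) {L m x : ℝ} (hL : 0 < L)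
    (hx : |x - m| ≤ L) :
    ∫⁻ t in E, ENNReal.ofReal (L / (L ^ 2 + (m - t) ^ 2)) ∂μ ≤ 16 * maxOp μ E x :=
  calc ∫⁻ t in E, ENNReal.ofReal (L / (L ^ 2 + (m - t) ^ 2)) ∂μ
      ≤ ∫⁻ t in E, ∑' k : ℕ, (Icc (m - 2 ^ k * L) (m + 2 ^ k * L)).indicator
          (fun _ => ENNReal.ofReal (4 * L / (2 ^ k * L) ^ 2)) t ∂μ :=
        lintegral_mono fun t => ofReal_poissonKernel_le_tsum hL m t
    _ = ∑' k : ℕ, ENNReal.ofReal (4 * L / (2 ^ k * L) ^ 2) *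
          μ (Icc (m - 2 ^ k * L) (m + 2 ^ k * L) ∩ E) := by
        rw [lintegral_tsum fun k => (measurable_const.indicator measurableSet_Icc).aemeasurable]
        congr 1 with k
        rw [lintegral_indicator measurableSet_Icc, setLIntegral_const,
          Measure.restrict_apply measurableSet_Icc]
    _ ≤ ∑' k : ℕ, ENNReal.ofReal (4 * L / (2 ^ k * L) ^ 2) *
          (maxOp μ E x * ENNReal.ofReal (2 * (2 ^ k * L))) := by
        gcongr with k
        exact measure_dyadic_inter_le_maxOp_mul μ E hL hx k
    _ = ∑' k : ℕ, 8 * 2⁻¹ ^ k * maxOp μ E x := by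
        congr 1 with k
        rw [mul_left_comm, dyadic_weight_mul_length hL k, mul_comm]
    _ = 16 * maxOp μ E x := by
        rw [ENNReal.tsum_mul_right, ENNReal.tsum_mul_left, ENNReal.tsum_geometric,
          ENNReal.one_sub_inv_two, inv_inv]
        norm_num

lemma poissonAvg_le_maxOp (μ : Measure ℝ) (E : Set ℝ) {c d x : ℝ} (hcd : c < d)
    (hx : x ∈ Icc c d) :
    poissonAvg μ c d E ≤ 16 * maxOp μ E x := by
  have hxm : |x - (c + d) / 2| ≤ d - c := abs_le.mpr ⟨by linarith [hx.1], by linarith [hx.2]⟩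
  have hpi : ENNReal.ofReal (1 / Real.pi) ≤ 1 := by
    rw [ENNReal.ofReal_le_one, div_le_one Real.pi_pos]
    linarith [Real.pi_gt_three]
  calc poissonAvg μ c d E
      ≤ 1 * (16 * maxOp μ E x) :=
        mul_le_mul' hpi (lintegral_poissonKernel_le_maxOp μ E (sub_pos.mpr hcd) hxm)
    _ = 16 * maxOp μ E x := one_mul _

lemma sq_poissonAvg_mul_le_lintegral_sq_maxOp (μ ν : Measure ℝ) (E : Set ℝ) {c d : ℝ}
    (hcd : c < d) :
    poissonAvg μ c d E ^ 2 * ν (Icc c d) ≤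
      256 * ∫⁻ x in Icc c d, maxOp μ E x ^ 2 ∂ν := by
  rw [← setLIntegral_const, ← lintegral_const_mul' _ _ (by norm_num)]
  refine setLIntegral_mono' measurableSet_Icc fun x hx => ?_
  calc poissonAvg μ c d E ^ 2 ≤ (16 * maxOp μ E x) ^ 2 :=
        pow_le_pow_left' (poissonAvg_le_maxOp μ E hcd hx) 2
    _ = 256 * maxOp μ E x ^ 2 := by rw [mul_pow]; norm_num

lemma sum_setLIntegral_le_of_pairwiseDisjoint {α ι : Type*} [MeasurableSpace α]
    {ν : Measure α} {F : Finset ι} {s : ι → Set α} {t : Set α} (f : α → ℝ≥0∞)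
    (hs : ∀ i ∈ F, MeasurableSet (s i)) (hdisj : (F : Set ι).PairwiseDisjoint s)
    (hst : ∀ i ∈ F, s i ⊆ t) :
    ∑ i ∈ F, ∫⁻ x in s i, f x ∂ν ≤ ∫⁻ x in t, f x ∂ν := by
  rw [← lintegral_biUnion_finset hdisj hs]
  exact lintegral_mono_set (iUnion₂_subset hst)

/-- If the two-weight maximal operator testing bound ∫_I (M_μ χ_I)² dν ≤ C_M μ(I) holds,
then for every finite family of pairwise disjoint subintervals {I_α} of I one has
Σ_α [P_{I_α}(χ_I dμ)]² ν(I_α) ≤ A·C_M·μ(I) for an absolute constant A. -/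
theorem maximal_implies_pivotal :
    ∃ A : ℝ≥0∞, 0 < A ∧ A < ⊤ ∧
    ∀ (μ ν : Measure ℝ) (a b : ℝ) (CM : ℝ≥0∞) (F : Finset (ℝ × ℝ)),
      a < b →
      (∫⁻ x in Set.Icc a b, (maxOp μ (Set.Icc a b) x) ^ 2 ∂ν) ≤ CM * μ (Set.Icc a b) →
      (∀ p ∈ F, a ≤ p.1 ∧ p.1 < p.2 ∧ p.2 ≤ b) →
      ((F : Set (ℝ × ℝ)).PairwiseDisjoint fun p => Set.Icc p.1 p.2) →
      (∑ p ∈ F, (poissonAvg μ p.1 p.2 (Set.Icc a b)) ^ 2 * ν (Set.Icc p.1 p.2)) ≤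
        A * CM * μ (Set.Icc a b) := by
  refine ⟨256, by norm_num, by norm_num, ?_⟩
  intro μ ν a b CM F _ htesting hsub hdisj
  have hsubset : ∀ p ∈ F, Icc p.1 p.2 ⊆ Icc a b := fun p hp =>
    Icc_subset_Icc (hsub p hp).1 (hsub p hp).2.2
  calc ∑ p ∈ F, poissonAvg μ p.1 p.2 (Icc a b) ^ 2 * ν (Icc p.1 p.2)
      ≤ ∑ p ∈ F, 256 * ∫⁻ x in Icc p.1 p.2, maxOp μ (Icc a b) x ^ 2 ∂ν :=
        Finset.sum_le_sum fun p hp =>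
          sq_poissonAvg_mul_le_lintegral_sq_maxOp μ ν _ (hsub p hp).2.1
    _ ≤ 256 * ∫⁻ x in Icc a b, maxOp μ (Icc a b) x ^ 2 ∂ν := by
        rw [← Finset.mul_sum]
        gcongr
        exact sum_setLIntegral_le_of_pairwiseDisjoint _ (fun _ _ => measurableSet_Icc) hdisj hsubset
    _ ≤ 256 * CM * μ (Icc a b) := by
        rw [mul_assoc]
        gcongr
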